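/- arXiv:1310.6205 — 2 statements merged into one kernel-verified Lean document; each statement's English description precedes it below -/
import Mathlib

section
/- Let T be a weighted monogamous trigraph with a switchable pair ab. If T is Berge, then the trigraphs T_{a→S}, T_{b→S}, T_{a→K} and T_{b→K} are Berge. -/
structure Trigraph (V : Type*) where
  θ : V → V → ℤ
  symm : ∀ u v, θ u v = θ v u
  range : ∀ u v, u ≠ v → θ u v = -1 ∨ θ u v = 0 ∨ θ u v = 1

namespace Trigraph

variable {V : Type*}

/-- `u` and `v` form a strong edge. -/
def SEdge (T : Trigraph V) (u v : V) : Prop := u ≠ v ∧ T.θ u v = 1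

/-- `u` and `v` form a strong antiedge. -/
def SAnti (T : Trigraph V) (u v : V) : Prop := u ≠ v ∧ T.θ u v = -1

/-- `u` and `v` form a switchable pair. -/
def Switch (T : Trigraph V) (u v : V) : Prop := u ≠ v ∧ T.θ u v = 0

/-- `u` and `v` are adjacent. -/
def Adj (T : Trigraph V) (u v : V) : Prop := u ≠ v ∧ (T.θ u v = 0 ∨ T.θ u v = 1)

/-- `u` and `v` are antiadjacent. -/
def Anti (T : Trigraph V) (u v : V) : Prop := u ≠ v ∧ (T.θ u v = -1 ∨ T.θ u v = 0)

instance [DecidableEq V] (T : Trigraph V) (u v : V) : Decidable (T.Adj u v) :=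
  inferInstanceAs (Decidable (u ≠ v ∧ (T.θ u v = 0 ∨ T.θ u v = 1)))

instance [DecidableEq V] (T : Trigraph V) (u v : V) : Decidable (T.Anti u v) :=
  inferInstanceAs (Decidable (u ≠ v ∧ (T.θ u v = -1 ∨ T.θ u v = 0)))

instance [DecidableEq V] (T : Trigraph V) (u v : V) : Decidable (T.Switch u v) :=
  inferInstanceAs (Decidable (u ≠ v ∧ T.θ u v = 0))

instance [DecidableEq V] (T : Trigraph V) (u v : V) : Decidable (T.SAnti u v) :=
  inferInstanceAs (Decidable (u ≠ v ∧ T.θ u v = -1))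

/-- A trigraph is monogamous if every vertex is in at most one switchable pair. -/
def Monogamous (T : Trigraph V) : Prop :=
  ∀ v u w : V, T.Switch v u → T.Switch v w → u = w

/-- The complement trigraph. -/
def compl (T : Trigraph V) : Trigraph V where
  θ := fun u v => -(T.θ u v)
  symm := fun u v => congrArg Neg.neg (T.symm u v)
  range := fun u v h => by
    have := T.range u v h
    try dsimp only
    omega

def IsBull (T : Trigraph V) (x1 x2 x3 y z : V) : Prop :=
  T.Adj x1 x2 ∧ T.Adj x1 x3 ∧ T.Adj x2 x3 ∧
  T.Adj y x1 ∧ T.Anti y x2 ∧ T.Anti y x3 ∧ T.Anti y z ∧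
  T.Adj z x2 ∧ T.Anti z x1 ∧ T.Anti z x3

def BullFree (T : Trigraph V) : Prop := ∀ x1 x2 x3 y z : V, ¬ T.IsBull x1 x2 x3 y z

/-- `S` is strongly complete to `A`. -/
def SComplete (T : Trigraph V) (S A : Set V) : Prop := ∀ s ∈ S, ∀ a ∈ A, T.SEdge s a

/-- `S` is strongly anticomplete to `A`. -/
def SAnticomplete (T : Trigraph V) (S A : Set V) : Prop := ∀ s ∈ S, ∀ a ∈ A, T.SAnti s a

/-- A homogeneous set. -/
def HomSet (T : Trigraph V) (X : Set V) : Prop :=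
  1 < X.ncard ∧ X.ncard < Nat.card V ∧
  ∀ v ∉ X, (∀ a ∈ X, T.SEdge v a) ∨ (∀ a ∈ X, T.SAnti v a)

/-- `(A,B,C,D,E,F)` is a split of the homogeneous pair `(A,B)`. -/
def IsSplit (T : Trigraph V) (A B C D E F : Set V) : Prop :=
  A.Nonempty ∧ B.Nonempty ∧ Disjoint A B ∧
  Disjoint C D ∧ Disjoint C E ∧ Disjoint C F ∧
  Disjoint D E ∧ Disjoint D F ∧ Disjoint E F ∧
  C ∪ D ∪ E ∪ F = (A ∪ B)ᶜ ∧
  T.SComplete A (C ∪ E) ∧ T.SAnticomplete A (D ∪ F) ∧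
  T.SComplete B (D ∪ E) ∧ T.SAnticomplete B (C ∪ F) ∧
  ¬ T.SComplete A B ∧ ¬ T.SAnticomplete A B ∧
  3 ≤ (A ∪ B).ncard ∧ 3 ≤ (C ∪ D ∪ E ∪ F).ncard

/-- `(A,B)` is a homogeneous pair. -/
def HomPair (T : Trigraph V) (A B : Set V) : Prop := ∃ C D E F, T.IsSplit A B C D E F

/-- A small homogeneous pair. -/
def SmallHomPair (T : Trigraph V) (A B : Set V) : Prop :=
  T.HomPair A B ∧ (A ∪ B).ncard ≤ 6

/-- A proper homogeneous pair. -/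
def ProperHomPair (T : Trigraph V) (A B : Set V) : Prop :=
  ∃ C D E F, T.IsSplit A B C D E F ∧ C.Nonempty ∧ D.Nonempty

/-- `(X, Xᶜ)` is a decomposition of `T`. -/
def Decomp (T : Trigraph V) (X : Set V) : Prop :=
  T.HomSet X ∨ ∃ A B, X = A ∪ B ∧ (T.SmallHomPair A B ∨ T.ProperHomPair A B)

/-- `(X, Xᶜ)` is a homogeneous cut of `T`. -/
def HomCut (T : Trigraph V) (X : Set V) : Prop :=
  T.HomSet X ∨ ∃ A B, X = A ∪ B ∧ T.ProperHomPair A B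

/-- A minimally-sided homogeneous cut. -/
def MinSidedHomCut (T : Trigraph V) (X : Set V) : Prop :=
  T.HomCut X ∧ ∀ X' : Set V, T.HomCut X' → ¬ X' ⊂ X

/-- The induced subtrigraph on `X`. -/
def induce (T : Trigraph V) (X : Set V) : Trigraph X where
  θ := fun u v => T.θ u v
  symm := fun u v => T.symm u v
  range := fun u v h => T.range u v (fun hh => h (Subtype.ext hh))

open Classical in
/-- The trigraph obtained from `T[X]` by adding two marker vertices joined by a switchable
pair, the first strongly complete to (the trace in `X` of) `P` and strongly anticomplete to
the rest of `X`, the second strongly complete to `Q` and strongly anticomplete to the rest. -/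
noncomputable def augment2 (T : Trigraph V) (X P Q : Set V) : Trigraph (↥X ⊕ Fin 2) where
  θ := fun u v =>
    match u, v with
    | Sum.inl u, Sum.inl v => T.θ u v
    | Sum.inl u, Sum.inr i => if (i = 0 ∧ (u : V) ∈ P) ∨ (i = 1 ∧ (u : V) ∈ Q) then 1 else -1
    | Sum.inr i, Sum.inl u => if (i = 0 ∧ (u : V) ∈ P) ∨ (i = 1 ∧ (u : V) ∈ Q) then 1 else -1
    | Sum.inr _, Sum.inr _ => 0
  symm := by
    rintro (u | i) (v | j)
    · exact T.symm u v
    · rfl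
    · rfl
    · rfl
  range := by
    rintro (u | i) (v | j) h
    · exact T.range u v fun hh => h (by rw [Subtype.ext hh])
    · dsimp only; split <;> simp
    · dsimp only; split <;> simp
    · simp

/-- The block of decomposition `T_X` for a proper homogeneous pair `(A,B)`:
`T[A ∪ B]` together with marker vertices `c` (strongly complete to `A`) and `d`
(strongly complete to `B`), with `cd` a switchable pair. -/
noncomputable def blockXPair (T : Trigraph V) (A B : Set V) : Trigraph (↥(A ∪ B) ⊕ Fin 2) :=
  T.augment2 (A ∪ B) A B

/-- The block of decomposition `T_Y` for a homogeneous pair `(A,B)` with split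
`(A,B,C,D,E,F)` : `T[Y]` (where `Y = (A ∪ B)ᶜ`) together with marker vertices `a`
(strongly complete to `C ∪ E`) and `b` (strongly complete to `D ∪ E`), with `ab` a
switchable pair. -/
noncomputable def blockYPair (T : Trigraph V) (A B C D E : Set V) : Trigraph (↥(A ∪ B)ᶜ ⊕ Fin 2) :=
  T.augment2 (A ∪ B)ᶜ (C ∪ E) (D ∪ E)


/-- A strong clique: vertices pairwise strongly adjacent. -/
def StrongClique (T : Trigraph V) (K : Set V) : Prop := K.Pairwise T.SEdge

/-- A strong stable set: vertices pairwise strongly antiadjacent. -/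
def StrongStable (T : Trigraph V) (K : Set V) : Prop := K.Pairwise T.SAnti

/-- `T[X]` is triangle-free. -/
def TriangleFreeOn (T : Trigraph V) (X : Set V) : Prop :=
  ∀ x ∈ X, ∀ y ∈ X, ∀ z ∈ X, ¬ (T.Adj x y ∧ T.Adj x z ∧ T.Adj y z)

/-- Membership in the basic class `𝒯₁`. -/
def InT1 (T : Trigraph V) : Prop :=
  T.Monogamous ∧ ∃ (X : Set V) (t : ℕ) (K : Fin t → Set V),
    (X ∪ ⋃ i, K i) = Set.univ ∧
    (∀ i, Disjoint X (K i)) ∧ (∀ i j, i ≠ j → Disjoint (K i) (K j)) ∧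
    T.TriangleFreeOn X ∧ (∀ i, T.StrongClique (K i)) ∧
    (∀ i j, i ≠ j → T.SAnticomplete (K i) (K j)) ∧
    (∀ i, ∀ v ∈ K i, ∃ A B : Set V,
      A ∪ B = {x ∈ X | T.Adj v x} ∧ Disjoint A B ∧
      T.StrongStable A ∧ T.StrongStable B ∧ T.SComplete A B)

/-- Membership in the basic class `𝒯₀`: monogamous trigraphs on at most 8 vertices. -/
def InT0 (T : Trigraph V) : Prop := T.Monogamous ∧ Nat.card V ≤ 8

/-- A basic trigraph: a member of `𝒯₀ ∪ 𝒯₁ ∪ 𝒯₁bar`. -/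
def Basic (T : Trigraph V) : Prop := T.InT0 ∨ T.InT1 ∨ T.compl.InT1

/-- `h` lists the vertices of a hole of length `k` in `T`. -/
def IsHole (T : Trigraph V) (k : ℕ) (h : Fin k → V) : Prop :=
  4 ≤ k ∧ Function.Injective h ∧ ∀ i j : Fin k,
    (((i.val + 1) % k = j.val ∨ (j.val + 1) % k = i.val) → T.Adj (h i) (h j)) ∧
    (i ≠ j → ¬ ((i.val + 1) % k = j.val ∨ (j.val + 1) % k = i.val) → T.Anti (h i) (h j))

def HasOddHole (T : Trigraph V) : Prop := ∃ k, Odd k ∧ ∃ h : Fin k → V, T.IsHole k h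

/-- A Berge trigraph: no odd hole and no odd antihole. -/
def Berge (T : Trigraph V) : Prop := ¬ T.HasOddHole ∧ ¬ T.compl.HasOddHole

/-- `(wv, we)` are legitimate weights for the trigraph `T`: `we` is symmetric and for every
switchable pair `uv` we have `max (wv u) (wv v) ≤ we u v ≤ wv u + wv v`. -/
def GoodWeights (T : Trigraph V) (wv : V → ℕ) (we : V → V → ℕ) : Prop :=
  (∀ u v, we u v = we v u) ∧
  ∀ u v, T.Switch u v → max (wv u) (wv v) ≤ we u v ∧ we u v ≤ wv u + wv v

/-- `S` is a stable set of `T`. -/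
def StableF (T : Trigraph V) (S : Finset V) : Prop :=
  ∀ u ∈ S, ∀ v ∈ S, u ≠ v → T.Anti u v

open Classical in
/-- The weight of a stable set `S`: the sum of the weights of the vertices of `S` that are
strongly antiadjacent to every other vertex of `S`, plus the sum of the weights of the
switchable pairs with both ends in `S`. -/
noncomputable def weightF (T : Trigraph V) (wv : V → ℕ) (we : V → V → ℕ) (S : Finset V) : ℕ :=
  (∑ v ∈ S.filter (fun v => ∀ u ∈ S, u ≠ v → T.SAnti u v), wv v)
    + (∑ u ∈ S, ∑ v ∈ S, if T.Switch u v then we u v else 0) / 2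

open Classical in
/-- The maximum weight of a stable set of `T` contained in `X`. -/
noncomputable def alphaOn [Fintype V] (T : Trigraph V) (wv : V → ℕ) (we : V → V → ℕ)
    (X : Set V) : ℕ :=
  (Finset.univ.powerset.filter fun S : Finset V => ↑S ⊆ X ∧ T.StableF S).sup (T.weightF wv we)

/-- The maximum weight of a stable set of `T`. -/
noncomputable def alphaW [Fintype V] (T : Trigraph V) (wv : V → ℕ) (we : V → V → ℕ) : ℕ :=
  T.alphaOn wv we Set.univ

open Classical in
/-- The trigraph `T_{a → S}` obtained from `T` by turning the switchable pair `ab` into a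
strong edge and adding a new vertex `a' = none` strongly complete to `N(a) ∖ {b}` and
strongly anticomplete to everything else (including `a`). -/
noncomputable def expandS (T : Trigraph V) (a b : V) : Trigraph (Option V) where
  θ := fun u v =>
    match u, v with
    | some u, some v => if (u = a ∧ v = b) ∨ (u = b ∧ v = a) then 1 else T.θ u v
    | some u, none => if T.Adj a u ∧ u ≠ b then 1 else -1
    | none, some v => if T.Adj a v ∧ v ≠ b then 1 else -1
    | none, none => -1
  symm := by
    rintro (_ | u) (_ | v)
    · rfl
    · rfl
    · rfl
    · dsimp only
      have hiff : ((u = a ∧ v = b) ∨ (u = b ∧ v = a)) ↔ ((v = a ∧ u = b) ∨ (v = b ∧ u = a)) := by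
        tauto
      rw [if_congr hiff rfl (T.symm u v)]
  range := by
    rintro (_ | u) (_ | v) h
    · exact absurd rfl h
    · dsimp only; split <;> simp
    · dsimp only; split <;> simp
    · dsimp only
      split
      · simp
      · exact T.range u v fun hh => h (by rw [hh])

open Classical in
/-- The trigraph `T_{a → K}`, defined like `T_{a → S}` except that the new vertex `a'` is in
addition strongly adjacent to `a`. -/
noncomputable def expandK (T : Trigraph V) (a b : V) : Trigraph (Option V) where
  θ := fun u v =>
    match u, v with
    | some u, some v => if (u = a ∧ v = b) ∨ (u = b ∧ v = a) then 1 else T.θ u v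
    | some u, none => if (T.Adj a u ∧ u ≠ b) ∨ u = a then 1 else -1
    | none, some v => if (T.Adj a v ∧ v ≠ b) ∨ v = a then 1 else -1
    | none, none => -1
  symm := by
    rintro (_ | u) (_ | v)
    · rfl
    · rfl
    · rfl
    · dsimp only
      have hiff : ((u = a ∧ v = b) ∨ (u = b ∧ v = a)) ↔ ((v = a ∧ u = b) ∨ (v = b ∧ u = a)) := by
        tauto
      rw [if_congr hiff rfl (T.symm u v)]
  range := by
    rintro (_ | u) (_ | v) h
    · exact absurd rfl h
    · dsimp only; split <;> simp
    · dsimp only; split <;> simp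
    · dsimp only
      split
      · simp
      · exact T.range u v fun hh => h (by rw [hh])

/-- Vertex weights for `T_{a → S}`. -/
def wvS (wv : V → ℕ) (we : V → V → ℕ) (a b : V) [DecidableEq V] : Option V → ℕ
  | some v => if v = a then wv a + wv b - we a b else wv v
  | none => we a b - wv b

/-- Vertex weights for `T_{a → K}`. -/
def wvK (wv : V → ℕ) (we : V → V → ℕ) (a b : V) : Option V → ℕ
  | some v => wv v
  | none => we a b - wv b

/-- Switchable-pair weights for `T_{a → S}` and `T_{a → K}`. -/
def weO (we : V → V → ℕ) : Option V → Option V → ℕ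
  | some u, some v => we u v
  | _, _ => 0

end Trigraph

/-!
Write `a'` for the new vertex. By monogamy `ab` is the only switchable pair at `a`, so every
neighbour of `a'` is a strong neighbour of `a`: no neighbour of `a'` is antiadjacent to `a`.
In a hole of length at least five, however, every vertex has a neighbour antiadjacent to any
other given vertex. Applied to `a'` and `a` in a hole, and to `a` and `a'` in an antihole, this
shows that no odd hole or antihole contains both. One that avoids `a` or `a'` becomes an odd
hole or antihole of `T` once `a'` is renamed `a`, because whenever `a'` is adjacent
(antiadjacent) to a vertex other than `a`, so is `a`.
-/

namespace Trigraph

variable {V W : Type*}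

section Basic

variable {T : Trigraph V} {u v : V}

theorem Adj.symm (h : T.Adj u v) : T.Adj v u :=
  ⟨h.1.symm, T.symm v u ▸ h.2⟩

theorem Anti.symm (h : T.Anti u v) : T.Anti v u :=
  ⟨h.1.symm, T.symm v u ▸ h.2⟩

theorem Switch.symm (h : T.Switch u v) : T.Switch v u :=
  ⟨h.1.symm, T.symm v u ▸ h.2⟩

theorem Switch.adj (h : T.Switch u v) : T.Adj u v := ⟨h.1, Or.inl h.2⟩

theorem Switch.anti (h : T.Switch u v) : T.Anti u v := ⟨h.1, Or.inr h.2⟩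

theorem anti_of_not_adj (huv : u ≠ v) (h : ¬ T.Adj u v) : T.Anti u v := by
  have := T.range u v huv
  exact ⟨huv, by by_contra hc; exact h ⟨huv, by omega⟩⟩

theorem compl_adj_iff : T.compl.Adj u v ↔ T.Anti u v :=
  and_congr_right fun _ => show -T.θ u v = 0 ∨ -T.θ u v = 1 ↔ _ by omega

theorem compl_anti_iff : T.compl.Anti u v ↔ T.Adj u v :=
  and_congr_right fun _ => show -T.θ u v = -1 ∨ -T.θ u v = 0 ↔ _ by omega

theorem Monogamous.theta_eq_one {a b : V} (hmono : T.Monogamous) (hab : T.Switch a b)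
    (h : T.Adj a v) (hvb : v ≠ b) : T.θ a v = 1 :=
  h.2.resolve_left fun h0 => hvb (hmono a v b ⟨h.1, h0⟩ hab)

end Basic

section Cycle

def CycAdj {k : ℕ} (i j : Fin k) : Prop :=
  (i.val + 1) % k = j.val ∨ (j.val + 1) % k = i.val

theorem succ_mod_eq {x k : ℕ} (hx : x < k) :
    (x + 1) % k = x + 1 ∧ x + 1 < k ∨ (x + 1) % k = 0 ∧ x + 1 = k := by
  rcases Nat.lt_or_eq_of_le (show x + 1 ≤ k from hx) with h | h
  · exact Or.inl ⟨Nat.mod_eq_of_lt h, h⟩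
  · exact Or.inr ⟨by rw [h, Nat.mod_self], h⟩

theorem cycAdj_iff {k : ℕ} {i j : Fin k} :
    CycAdj i j ↔ j.val = i.val + 1 ∨ i.val = j.val + 1 ∨
      (i.val + 1 = k ∧ j.val = 0) ∨ (j.val + 1 = k ∧ i.val = 0) := by
  unfold CycAdj
  rcases succ_mod_eq i.isLt with ⟨hi, _⟩ | ⟨hi, _⟩ <;>
    rcases succ_mod_eq j.isLt with ⟨hj, _⟩ | ⟨hj, _⟩ <;>
    rw [hi, hj] <;> omega

theorem exists_cycAdj_not_cycAdj {k : ℕ} (hk : 5 ≤ k) {i j : Fin k} (hij : i ≠ j) :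
    ∃ m, CycAdj i m ∧ m ≠ j ∧ ¬ CycAdj j m := by
  by_contra! H
  obtain ⟨m₁, hm₁⟩ : ∃ m : Fin k, m.val = i.val + 1 ∨ (i.val + 1 = k ∧ m.val = 0) := by
    by_cases hi : i.val + 1 < k
    · exact ⟨⟨i.val + 1, hi⟩, Or.inl rfl⟩
    · exact ⟨⟨0, by omega⟩, Or.inr ⟨by omega, rfl⟩⟩
  obtain ⟨m₂, hm₂⟩ : ∃ m : Fin k, i.val = m.val + 1 ∨ (m.val + 1 = k ∧ i.val = 0) := by
    by_cases hi : i.val = 0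
    · exact ⟨⟨k - 1, by omega⟩, Or.inr ⟨by simp only; omega, hi⟩⟩
    · exact ⟨⟨i.val - 1, by omega⟩, Or.inl (by simp only; omega)⟩
  have h₁ := H m₁ (cycAdj_iff.mpr (by omega))
  have h₂ := H m₂ (cycAdj_iff.mpr (by omega))
  rw [cycAdj_iff] at h₁ h₂
  simp only [ne_eq, Fin.ext_iff] at h₁ h₂ hij
  omega

end Cycle

section Hole

variable {G : Trigraph W} {k : ℕ} {h : Fin k → W}

theorem IsHole.exists_adj_anti (hh : G.IsHole k h) (hk : 5 ≤ k) {i j : Fin k} (hij : i ≠ j) :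
    ∃ m, G.Adj (h i) (h m) ∧ G.Anti (h j) (h m) := by
  obtain ⟨m, him, hmj, hjm⟩ := exists_cycAdj_not_cycAdj hk hij
  exact ⟨m, (hh.2.2 i m).1 him, (hh.2.2 j m).2 (Ne.symm hmj) hjm⟩

theorem IsHole.map {T : Trigraph V} (hh : G.IsHole k h) (f : W → V)
    (hf : Function.Injective (f ∘ h))
    (hadj : ∀ i j, G.Adj (h i) (h j) → T.Adj (f (h i)) (f (h j)))
    (hanti : ∀ i j, G.Anti (h i) (h j) → T.Anti (f (h i)) (f (h j))) :
    T.IsHole k (f ∘ h) :=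
  ⟨hh.1, hf, fun i j =>
    ⟨fun hc => hadj i j ((hh.2.2 i j).1 hc), fun hne hc => hanti i j ((hh.2.2 i j).2 hne hc)⟩⟩

theorem IsHole.five_le (hh : G.IsHole k h) (hodd : Odd k) : 5 ≤ k := by
  obtain ⟨r, rfl⟩ := hodd
  have := hh.1
  omega

end Hole

theorem getD_comp_injective {k : ℕ} {h : Fin k → Option V} (hinj : Function.Injective h)
    {a : V} (hmix : ∀ i j, h i = none → h j ≠ some a) :
    Function.Injective fun i => (h i).getD a := by
  intro i j e
  apply hinj
  rcases hi : h i with _ | u <;> rcases hj : h j with _ | v <;>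
    simp only [hi, hj, Option.getD_none, Option.getD_some] at e
  · rfl
  · exact absurd (e ▸ hj) (hmix i j hi)
  · exact absurd (e ▸ hi) (hmix j i hj)
  · rw [e]

/-- `T'` agrees with `T_{a→S}` and with `T_{a→K}` (vertex `none` being `a'`) everywhere except
possibly on the pair `aa'`, which is where the two constructions differ. -/
structure IsExpansion (T' : Trigraph (Option V)) (T : Trigraph V) (a b : V) : Prop where
  theta_ab : T'.θ (some a) (some b) = 1
  theta_some : ∀ u v, s(u, v) ≠ s(a, b) → T'.θ (some u) (some v) = T.θ u v
  theta_none_of_adj : ∀ w, T.Adj a w → w ≠ b → T'.θ none (some w) = 1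
  theta_none_of_not_adj : ∀ w, w ≠ a → ¬ (T.Adj a w ∧ w ≠ b) → T'.θ none (some w) = -1

theorem expandS_isExpansion (T : Trigraph V) (a b : V) : (T.expandS a b).IsExpansion T a b where
  theta_ab := if_pos (Or.inl ⟨rfl, rfl⟩)
  theta_some u v h := if_neg (by simpa [Sym2.eq_iff] using h)
  theta_none_of_adj w haw hwb := if_pos ⟨haw, hwb⟩
  theta_none_of_not_adj w _ h := if_neg h

theorem expandK_isExpansion (T : Trigraph V) (a b : V) : (T.expandK a b).IsExpansion T a b where
  theta_ab := if_pos (Or.inl ⟨rfl, rfl⟩)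
  theta_some u v h := if_neg (by simpa [Sym2.eq_iff] using h)
  theta_none_of_adj w haw hwb := if_pos (Or.inl ⟨haw, hwb⟩)
  theta_none_of_not_adj w hwa h := if_neg (by tauto)

namespace IsExpansion

variable {T' : Trigraph (Option V)} {T : Trigraph V} {a b : V}

theorem adj_some (hT' : T'.IsExpansion T a b) (hab : T.Switch a b) {u v : V}
    (h : T'.Adj (some u) (some v)) : T.Adj u v := by
  by_cases huv : s(u, v) = s(a, b)
  · rcases Sym2.eq_iff.mp huv with ⟨rfl, rfl⟩ | ⟨rfl, rfl⟩
    exacts [hab.adj, hab.adj.symm]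
  · exact ⟨fun e => h.1 (congrArg some e), hT'.theta_some u v huv ▸ h.2⟩

theorem anti_some (hT' : T'.IsExpansion T a b) {u v : V}
    (h : T'.Anti (some u) (some v)) : T.Anti u v := by
  by_cases huv : s(u, v) = s(a, b)
  · have h1 : T'.θ (some u) (some v) = 1 := by
      rcases Sym2.eq_iff.mp huv with ⟨rfl, rfl⟩ | ⟨rfl, rfl⟩
      exacts [hT'.theta_ab, T'.symm _ _ ▸ hT'.theta_ab]
    have := h.2
    omega
  · exact ⟨fun e => h.1 (congrArg some e), hT'.theta_some u v huv ▸ h.2⟩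

theorem adj_none (hT' : T'.IsExpansion T a b) {w : V} (hwa : w ≠ a)
    (h : T'.Adj none (some w)) : T.Adj a w ∧ w ≠ b := by
  by_contra hw
  have := h.2
  rw [hT'.theta_none_of_not_adj w hwa hw] at this
  omega

theorem anti_none (hT' : T'.IsExpansion T a b) (hab : T.Switch a b) {w : V} (hwa : w ≠ a)
    (h : T'.Anti none (some w)) : T.Anti a w := by
  by_cases hw : T.Adj a w ∧ w ≠ b
  · have := h.2
    rw [hT'.theta_none_of_adj w hw.1 hw.2] at this
    omega
  · by_cases hwb : w = b
    · exact hwb ▸ hab.anti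
    · exact anti_of_not_adj hwa.symm fun haw => hw ⟨haw, hwb⟩

theorem not_adj_none_and_anti (hT' : T'.IsExpansion T a b) (hmono : T.Monogamous)
    (hab : T.Switch a b) (z : Option V) : ¬ (T'.Adj none z ∧ T'.Anti (some a) z) := by
  rintro ⟨hadj, hanti⟩
  rcases z with _ | w
  · exact hadj.1 rfl
  have hwa : w ≠ a := fun e => hanti.1 (congrArg some e.symm)
  obtain ⟨haw, hwb⟩ := hT'.adj_none hwa hadj
  have hab' : s(a, w) ≠ s(a, b) := fun e => hwb (Sym2.congr_right.mp e)
  have := hanti.2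
  rw [hT'.theta_some a w hab', hmono.theta_eq_one hab haw hwb] at this
  omega

section Transfer

variable (hT' : T'.IsExpansion T a b) (hab : T.Switch a b) {x y : Option V}
  (hxy : x = none → y ≠ some a) (hyx : y = none → x ≠ some a)
include hT' hab hxy hyx

theorem adj_getD (h : T'.Adj x y) : T.Adj (x.getD a) (y.getD a) := by
  rcases x with _ | u <;> rcases y with _ | v
  · exact absurd rfl h.1
  · exact (hT'.adj_none (fun e => hxy rfl (congrArg some e)) h).1
  · exact (hT'.adj_none (fun e => hyx rfl (congrArg some e)) h.symm).1.symm
  · exact hT'.adj_some hab h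

theorem anti_getD (h : T'.Anti x y) : T.Anti (x.getD a) (y.getD a) := by
  rcases x with _ | u <;> rcases y with _ | v
  · exact absurd rfl h.1
  · exact hT'.anti_none hab (fun e => hxy rfl (congrArg some e)) h
  · exact (hT'.anti_none hab (fun e => hyx rfl (congrArg some e)) h.symm).symm
  · exact hT'.anti_some h

end Transfer

variable (hT' : T'.IsExpansion T a b) (hmono : T.Monogamous) (hab : T.Switch a b)
include hT' hmono hab

theorem not_hasOddHole (hT : ¬ T.HasOddHole) : ¬ T'.HasOddHole := by
  rintro ⟨k, hodd, h, hh⟩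
  by_cases hmix : ∃ i j, h i = none ∧ h j = some a
  · obtain ⟨i, j, hi, hj⟩ := hmix
    obtain ⟨m, hadj, hanti⟩ :=
      hh.exists_adj_anti (hh.five_le hodd) (i := i) (j := j) (by rintro rfl; simp [hi] at hj)
    rw [hi] at hadj
    rw [hj] at hanti
    exact hT'.not_adj_none_and_anti hmono hab _ ⟨hadj, hanti⟩
  · push Not at hmix
    exact hT ⟨k, hodd, _, hh.map (·.getD a) (getD_comp_injective hh.2.1 hmix)
      (fun i j => hT'.adj_getD hab (hmix i j) (hmix j i))
      (fun i j => hT'.anti_getD hab (hmix i j) (hmix j i))⟩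

theorem not_hasOddHole_compl (hT : ¬ T.compl.HasOddHole) : ¬ T'.compl.HasOddHole := by
  rintro ⟨k, hodd, h, hh⟩
  by_cases hmix : ∃ i j, h i = none ∧ h j = some a
  · obtain ⟨i, j, hi, hj⟩ := hmix
    obtain ⟨m, hadj, hanti⟩ :=
      hh.exists_adj_anti (hh.five_le hodd) (i := j) (j := i) (by rintro rfl; simp [hi] at hj)
    rw [hj, compl_adj_iff] at hadj
    rw [hi, compl_anti_iff] at hanti
    exact hT'.not_adj_none_and_anti hmono hab _ ⟨hanti, hadj⟩
  · push Not at hmix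
    exact hT ⟨k, hodd, _, hh.map (·.getD a) (getD_comp_injective hh.2.1 hmix)
      (fun i j h => compl_adj_iff.mpr (hT'.anti_getD hab (hmix i j) (hmix j i)
        (compl_adj_iff.mp h)))
      (fun i j h => compl_anti_iff.mpr (hT'.adj_getD hab (hmix i j) (hmix j i)
        (compl_anti_iff.mp h)))⟩

theorem berge (hB : T.Berge) : T'.Berge :=
  ⟨hT'.not_hasOddHole hmono hab hB.1, hT'.not_hasOddHole_compl hmono hab hB.2⟩

end IsExpansion

end Trigraph

theorem expand_berge_general {V : Type} (T : Trigraph V)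
    (hmono : T.Monogamous)
    (a b : V) (hab : T.Switch a b) (hB : T.Berge) :
    (T.expandS a b).Berge ∧ (T.expandS b a).Berge ∧
    (T.expandK a b).Berge ∧ (T.expandK b a).Berge :=
  ⟨(T.expandS_isExpansion a b).berge hmono hab hB,
    (T.expandS_isExpansion b a).berge hmono hab.symm hB,
    (T.expandK_isExpansion a b).berge hmono hab hB,
    (T.expandK_isExpansion b a).berge hmono hab.symm hB⟩

/-- If a weighted monogamous trigraph `T` with a switchable pair `ab` is Berge, then the
trigraphs `T_{a→S}`, `T_{b→S}`, `T_{a→K}` and `T_{b→K}` are Berge. -/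
theorem expand_berge {V : Type} [Fintype V] [DecidableEq V] (T : Trigraph V)
    (hmono : T.Monogamous) (wv : V → ℕ) (we : V → V → ℕ) (hw : T.GoodWeights wv we)
    (a b : V) (hab : T.Switch a b) (hB : T.Berge) :
    (T.expandS a b).Berge ∧ (T.expandS b a).Berge ∧
    (T.expandK a b).Berge ∧ (T.expandK b a).Berge :=
  expand_berge_general T hmono a b hab hB
end

section
/- Let G be a finite bull-free graph, let X ⊆ V(G) be such that the induced subgraph G[X] is triangle-free, and let K be a clique of G disjoint from X. Then the family {N(v)∩X : v ∈ K} of subsets of X shatters no 3-element subset of X (i.e., it has Vapnik–Chervonenkis dimension at most 2), and consequently the number of distinct sets of the form N(v)∩X with v ∈ K is at most C(|X|,2) + |X| + 1, where C(n,2) denotes the binomial coefficient. -/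
/-- The bull graph: a triangle `x₁ = 0`, `x₂ = 1`, `x₃ = 2` together with two horns
`y = 3` (adjacent to `x₁`) and `z = 4` (adjacent to `x₂`). -/
def bullGraph : SimpleGraph (Fin 5) :=
  SimpleGraph.fromEdgeSet {s(0, 1), s(0, 2), s(1, 2), s(0, 3), s(1, 4)}

/-- A graph is bull-free if it has no induced subgraph isomorphic to the bull. -/
def BullFree {V : Type*} (G : SimpleGraph V) : Prop :=
  ∀ f : Fin 5 → V, ¬ (Function.Injective f ∧ ∀ u v, bullGraph.Adj u v ↔ G.Adj (f u) (f v))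

/-- The chromatic number of `G` (as a natural number). -/
noncomputable def chromNum {V : Type*} (G : SimpleGraph V) : ℕ :=
  sInf {n | G.Colorable n}

/-- The clique number of `G`. -/
noncomputable def cliqueNum {V : Type*} (G : SimpleGraph V) : ℕ :=
  sSup {n | ∃ s : Finset V, G.IsNClique n s}

/-- The independence number of `G`. -/
noncomputable def indepNum {V : Type*} (G : SimpleGraph V) : ℕ :=
  sSup {n | ∃ s : Finset V, Gᶜ.IsNClique n s}

/-- The triangle-free chromatic number of `G`: the maximum chromatic number of a
triangle-free induced subgraph of `G`. -/
noncomputable def chiT {V : Type*} (G : SimpleGraph V) : ℕ :=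
  sSup {m | ∃ S : Set V, (G.induce S).CliqueFree 3 ∧ m = chromNum (G.induce S)}

/-- `G` contains an odd hole: an induced cycle of odd length at least 5. -/
def HasOddHole {V : Type*} (G : SimpleGraph V) : Prop :=
  ∃ k : ℕ, 5 ≤ k ∧ Odd k ∧ ∃ f : Fin k → V, Function.Injective f ∧
    ∀ i j : Fin k, G.Adj (f i) (f j) ↔ ((i.val + 1) % k = j.val ∨ (j.val + 1) % k = i.val)

/-- A semicoloring of `G`: no inclusion-maximal clique with at least two vertices is
monochromatic. -/
def IsSemicoloring {V : Type*} (G : SimpleGraph V) {N : ℕ} (c : V → Fin N) : Prop :=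
  ∀ K : Finset V, G.IsClique ↑K →
    (∀ K' : Finset V, G.IsClique ↑K' → K ⊆ K' → K = K') →
    2 ≤ K.card → ∃ u ∈ K, ∃ v ∈ K, c u ≠ c v

/-- The Ramsey number `R(s, t)`: the least `n` such that every graph on `n` vertices has a
clique of size `s` or an independent set of size `t`. -/
noncomputable def ramsey (s t : ℕ) : ℕ :=
  sInf {n | ∀ G : SimpleGraph (Fin n),
    (∃ K : Finset (Fin n), G.IsNClique s K) ∨ (∃ I : Finset (Fin n), Gᶜ.IsNClique t I)}


/-!
If the traces `N(v) ∩ X`, `v ∈ K`, shattered a triple of `X`, then, `G[X]` being triangle-free,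
the triple contains a non-edge `ab`, and the vertices `u, w, s ∈ K` with traces `{a}`, `{b}`, `∅`
on `{a, b}` span, together with `a` and `b`, an induced bull: the triangle `uws` with horns `ua`
and `wb`. The bound on the number of traces is then the Sauer–Shelah lemma for VC dimension 2.
-/

open Finset

lemma Finset.card_le_sum_choose_of_shatters_card_le {α : Type*} [DecidableEq α]
    {𝒜 : Finset (Finset α)} {s : Finset α} {d : ℕ} (h𝒜 : ∀ t ∈ 𝒜, t ⊆ s)
    (hd : ∀ t, 𝒜.Shatters t → #t ≤ d) :
    #𝒜 ≤ ∑ k ∈ Iic d, (#s).choose k := by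
  simp_rw [← card_powersetCard]
  refine (card_le_card_shatterer 𝒜).trans <|
    (card_le_card fun t ht ↦ mem_biUnion.2 ⟨#t, ?_⟩).trans card_biUnion_le
  obtain ⟨u, hu, htu⟩ := (mem_shatterer.1 ht).exists_superset
  exact ⟨mem_Iic.2 (hd t (mem_shatterer.1 ht)), mem_powersetCard.2 ⟨htu.trans (h𝒜 u hu), rfl⟩⟩

theorem Set.ncard_traces_le_sum_choose {α ι : Type*} [Fintype α] {f : ι → Set α} {K : Set ι}
    {X : Set α} {d : ℕ}
    (hvc : ∀ S ⊆ X, S.ncard = d + 1 → ¬ ∀ Y ⊆ S, ∃ v ∈ K, f v ∩ X ∩ S = Y) :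
    {A | ∃ v ∈ K, A = f v ∩ X}.ncard ≤ ∑ k ∈ Finset.Iic d, X.ncard.choose k := by
  classical
  set 𝒜 : Finset (Finset α) :=
    X.toFinset.powerset.filter fun t ↦ ∃ v ∈ K, (t : Set α) = f v ∩ X
  have h𝒜X : ∀ t ∈ 𝒜, t ⊆ X.toFinset := fun t ht ↦
    Finset.mem_powerset.1 (Finset.mem_filter.1 ht).1
  have htraces : {A | ∃ v ∈ K, A = f v ∩ X} = (↑) '' (𝒜 : Set (Finset α)) := by
    ext A
    simp only [Set.mem_ofPred_eq, Set.mem_image, Finset.mem_coe, 𝒜, Finset.mem_filter,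
      Finset.mem_powerset]
    constructor
    · rintro ⟨v, hv, rfl⟩
      exact ⟨(f v ∩ X).toFinset, ⟨by simp, v, hv, by simp⟩, by simp⟩
    · rintro ⟨t, ⟨-, v, hv, htv⟩, rfl⟩
      exact ⟨v, hv, htv⟩
  rw [htraces, Set.ncard_image_of_injective _ Finset.coe_injective, Set.ncard_coe_finset,
    Set.ncard_eq_toFinset_card']
  refine Finset.card_le_sum_choose_of_shatters_card_le h𝒜X fun t ht ↦ ?_
  by_contra! hlt
  obtain ⟨S, hSt, hS⟩ := Finset.exists_subset_card_eq hlt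
  obtain ⟨T, hT, htT⟩ := ht.exists_superset
  refine hvc S (fun x hx ↦ ?_) (by simpa) fun Y hY ↦ ?_
  · simpa using h𝒜X T hT (htT (hSt hx))
  have hS𝒜 : 𝒜.Shatters S := ht.mono_right hSt
  obtain ⟨u, hu, hSu⟩ := hS𝒜 (t := Y.toFinset) (by simpa using hY)
  obtain ⟨v, hv, huv⟩ := (Finset.mem_filter.1 hu).2
  exact ⟨v, hv, by rw [← huv, Set.inter_comm, ← Finset.coe_inter, hSu, Set.coe_toFinset]⟩

lemma SimpleGraph.exists_not_adj_of_cliqueFree_three {V : Type*} {G : SimpleGraph V}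
    {X S : Set V} (hX : (G.induce X).CliqueFree 3) (hSX : S ⊆ X) (hS : S.ncard = 3) :
    ∃ a ∈ S, ∃ b ∈ S, a ≠ b ∧ ¬ G.Adj a b := by
  classical
  obtain ⟨a, b, c, hab, hac, hbc, rfl⟩ := Set.ncard_eq_three.1 hS
  by_contra! hadj
  apply hX {⟨a, hSX (by simp)⟩, ⟨b, hSX (by simp)⟩, ⟨c, hSX (by simp)⟩}
  rw [SimpleGraph.is3Clique_triple_iff]
  simp_all

namespace BullFree

variable {V : Type*} {G : SimpleGraph V}

lemma false_of_bull (hbf : BullFree G) {u w s a b : V}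
    (huw : G.Adj u w) (hus : G.Adj u s) (hws : G.Adj w s) (hua : G.Adj u a) (hwb : G.Adj w b)
    (hub : ¬ G.Adj u b) (hwa : ¬ G.Adj w a) (hsa : ¬ G.Adj s a) (hsb : ¬ G.Adj s b)
    (hab : ¬ G.Adj a b) : False := by
  have := huw.ne; have := hus.ne; have := hws.ne; have := hua.ne; have := hwb.ne
  have : a ≠ w := by rintro rfl; exact hsa hws.symm
  have : a ≠ s := by rintro rfl; exact hwa hws
  have : b ≠ u := by rintro rfl; exact hsb hus.symm
  have : b ≠ s := by rintro rfl; exact hub hus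
  have : a ≠ b := by rintro rfl; exact hub hua
  refine hbf ![u, w, s, a, b] ⟨fun i j hij ↦ ?_, fun i j ↦ ?_⟩
  · fin_cases i <;> fin_cases j <;> simp_all
  · fin_cases i <;> fin_cases j <;> simp_all [bullGraph, G.adj_comm]

lemma not_shatters_of_not_adj (hbf : BullFree G) {K X S : Set V} (hK : G.IsClique K)
    (hSX : S ⊆ X) {a b : V} (ha : a ∈ S) (hb : b ∈ S) (hab : a ≠ b) (hnadj : ¬ G.Adj a b) :
    ¬ ∀ Y ⊆ S, ∃ v ∈ K, G.neighborSet v ∩ X ∩ S = Y := by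
  intro hshat
  have adj_iff {v x : V} {Y : Set V} (hv : G.neighborSet v ∩ X ∩ S = Y) (hx : x ∈ S) :
      G.Adj v x ↔ x ∈ Y := by
    subst hv; simp [hx, hSX hx]
  obtain ⟨u, huK, hu⟩ := hshat {a} (by simpa)
  obtain ⟨w, hwK, hw⟩ := hshat {b} (by simpa)
  obtain ⟨s, hsK, hs⟩ := hshat ∅ (by simp)
  have hua : G.Adj u a := (adj_iff hu ha).2 rfl
  have hwb : G.Adj w b := (adj_iff hw hb).2 rfl
  have hub : ¬ G.Adj u b := fun h ↦ hab ((adj_iff hu hb).1 h).symm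
  have hwa : ¬ G.Adj w a := fun h ↦ hab ((adj_iff hw ha).1 h)
  have hsa : ¬ G.Adj s a := (adj_iff hs ha).1
  have hsb : ¬ G.Adj s b := (adj_iff hs hb).1
  have huw : u ≠ w := by rintro rfl; exact hwa hua
  have hus : u ≠ s := by rintro rfl; exact hsa hua
  have hws : w ≠ s := by rintro rfl; exact hsb hwb
  exact hbf.false_of_bull (hK huK hwK huw) (hK huK hsK hus) (hK hwK hsK hws)
    hua hwb hub hwa hsa hsb hnadj

lemma not_shatters_of_ncard_eq_three (hbf : BullFree G) {K X S : Set V} (hK : G.IsClique K)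
    (hX : (G.induce X).CliqueFree 3) (hSX : S ⊆ X) (hS : S.ncard = 3) :
    ¬ ∀ Y ⊆ S, ∃ v ∈ K, G.neighborSet v ∩ X ∩ S = Y := by
  obtain ⟨a, ha, b, hb, hab, hnadj⟩ := G.exists_not_adj_of_cliqueFree_three hX hSX hS
  exact hbf.not_shatters_of_not_adj hK hSX ha hb hab hnadj

end BullFree

theorem bullfree_trace_vc_general {V : Type} [Fintype V] (G : SimpleGraph V)
    (hbf : BullFree G) (X : Set V) (hX : (G.induce X).CliqueFree 3)
    (K : Set V) (hK : G.IsClique K) :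
    (∀ S : Set V, S ⊆ X → S.ncard = 3 →
      ¬ (∀ Y : Set V, Y ⊆ S → ∃ v ∈ K, (G.neighborSet v ∩ X) ∩ S = Y)) ∧
    {A : Set V | ∃ v ∈ K, A = G.neighborSet v ∩ X}.ncard ≤
      X.ncard.choose 2 + X.ncard + 1 := by
  have hvc : ∀ S ⊆ X, S.ncard = 3 → ¬ ∀ Y ⊆ S, ∃ v ∈ K, G.neighborSet v ∩ X ∩ S = Y :=
    fun S hSX hS ↦ hbf.not_shatters_of_ncard_eq_three hK hX hSX hS
  refine ⟨hvc, (Set.ncard_traces_le_sum_choose hvc).trans_eq ?_⟩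
  rw [← Nat.range_succ_eq_Iic]
  simp only [sum_range_succ, range_zero, sum_empty, Nat.choose_zero_right, Nat.choose_one_right]
  ring

/-- In a finite bull-free graph `G`, if `X` induces a triangle-free subgraph and `K` is a
clique disjoint from `X`, then the family of traces `N(v) ∩ X` (for `v ∈ K`) shatters no
3-element subset of `X` (VC dimension at most 2), and hence the number of distinct such
traces is at most `C(|X|, 2) + |X| + 1`. -/
theorem bullfree_trace_vc {V : Type} [Fintype V] [DecidableEq V] (G : SimpleGraph V)
    (hbf : BullFree G) (X : Set V) (hX : (G.induce X).CliqueFree 3)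
    (K : Set V) (hK : G.IsClique K) (hdisj : Disjoint K X) :
    (∀ S : Set V, S ⊆ X → S.ncard = 3 →
      ¬ (∀ Y : Set V, Y ⊆ S → ∃ v ∈ K, (G.neighborSet v ∩ X) ∩ S = Y)) ∧
    {A : Set V | ∃ v ∈ K, A = G.neighborSet v ∩ X}.ncard ≤
      X.ncard.choose 2 + X.ncard + 1 :=
  bullfree_trace_vc_general G hbf X hX K hK
end
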